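/- arXiv:2306.04182 — 2 statements merged into one kernel-verified Lean document; each statement's English description precedes it below -/
import Mathlib

section
/- Let L : R^p → R be convex and differentiable, R a norm with dual norm R*, and δ* ∈ R^p with R(δ*) ≤ l. Suppose L satisfies the restricted strong convexity condition: L(δ* + Δ) − L(δ*) − ⟨∇L(δ*), Δ⟩ ≥ κ‖Δ‖² − τ for all Δ with R(Δ) ≤ 4l, where κ > 0 and τ ≥ 0. If δ̂ minimizes δ ↦ L(δ) + λ R(δ) with λ ≥ 2 R*(∇L(δ*)), then Δ̂ = δ̂ − δ* satisfies κ‖Δ̂‖² ≤ 2 R*(∇L(δ*)) · l + λ R(δ*) + τ ≤ 3 λ l + τ. -/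
/-!
Comparing the minimizer `δ̂` with `δ*` gives `L δ̂ - L δ* ≤ λ (R δ* - R δ̂)`, while duality gives
`-⟪∇L δ*, Δ̂⟫ ≤ R*(∇L δ*) R Δ̂ ≤ (λ / 2) (R δ̂ + R δ*)`. Combined with the convexity bound
`⟪∇L δ*, Δ̂⟫ ≤ L δ̂ - L δ*`, this forces `R δ̂ ≤ 3 R δ*`, so `R Δ̂ ≤ 4 l` and restricted strong
convexity applies to `Δ̂`; the same two estimates bound the right-hand side of that inequality.
-/

open scoped RealInnerProductSpace

open Set Metric

theorem ConvexOn.inner_gradient_le_sub {E : Type*} [NormedAddCommGroup E]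
    [InnerProductSpace ℝ E] [CompleteSpace E] {f : E → ℝ} (hf : ConvexOn ℝ univ f) {x : E}
    (hx : DifferentiableAt ℝ f x) (y : E) : ⟪gradient f x, y - x⟫ ≤ f y - f x := by
  have hline : ConvexOn ℝ univ (f ∘ AffineMap.lineMap (k := ℝ) x y) := by
    simpa using hf.comp_affineMap (AffineMap.lineMap (k := ℝ) x y)
  have hderiv : HasDerivAt (f ∘ AffineMap.lineMap (k := ℝ) x y) ⟪gradient f x, y - x⟫ 0 := by
    have := hx.hasGradientAt.hasFDerivAt.comp_hasDerivAt_of_eq (0 : ℝ)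
      (AffineMap.hasDerivAt_lineMap (a := x) (b := y) (x := 0)) (by simp)
    simpa using this
  simpa [slope_def_field] using
    hline.le_slope_of_hasDerivAt (mem_univ 0) (mem_univ 1) one_pos hderiv

namespace Seminorm

section FiniteDimensional

variable {E : Type*} [NormedAddCommGroup E] [NormedSpace ℝ E] [FiniteDimensional ℝ E]

theorem exists_pos_mul_norm_le (p : Seminorm ℝ E) (hp : ∀ x, p x = 0 → x = 0) :
    ∃ c > 0, ∀ x, c * ‖x‖ ≤ p x := by
  rcases subsingleton_or_nontrivial E with hE | hE
  · exact ⟨1, one_pos, fun x => by simp [Subsingleton.elim x 0]⟩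
  have hcont : Continuous p := continuousOn_univ.mp (p.convexOn.continuousOn isOpen_univ)
  obtain ⟨u, hu, hmin⟩ := (isCompact_sphere (0 : E) 1).exists_isMinOn
    (NormedSpace.sphere_nonempty.mpr zero_le_one) hcont.continuousOn
  have hu0 : u ≠ 0 := ne_zero_of_mem_sphere one_ne_zero ⟨u, hu⟩
  refine ⟨p u, (apply_nonneg p u).lt_of_ne' fun h => hu0 (hp u h), fun x => ?_⟩
  rcases eq_or_ne x 0 with rfl | hx
  · simp
  have hxpos : 0 < ‖x‖ := norm_pos_iff.mpr hx
  have hle : p u ≤ ‖x‖⁻¹ * p x := by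
    simpa [map_smul_eq_mul, abs_of_pos hxpos] using
      hmin (show ‖x‖⁻¹ • x ∈ sphere (0 : E) 1 by simp [norm_smul, hx])
  calc p u * ‖x‖ ≤ ‖x‖⁻¹ * p x * ‖x‖ := by gcongr
    _ = p x := by field_simp

end FiniteDimensional

section Dual

variable {E : Type*} [NormedAddCommGroup E] [InnerProductSpace ℝ E]

/-- The dual norm `R*`. Where the set is unbounded `sSup` is junk, which
`bddAbove_inner_of_le_one` rules out for definite seminorms in finite dimension. -/
noncomputable def dualNorm (p : Seminorm ℝ E) (v : E) : ℝ := sSup {y | ∃ u, p u ≤ 1 ∧ y = ⟪u, v⟫}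

variable [FiniteDimensional ℝ E] {p : Seminorm ℝ E}

theorem bddAbove_inner_of_le_one (hp : ∀ x, p x = 0 → x = 0) (v : E) :
    BddAbove {y | ∃ u, p u ≤ 1 ∧ y = ⟪u, v⟫} := by
  obtain ⟨c, hc, hcp⟩ := p.exists_pos_mul_norm_le hp
  refine ⟨c⁻¹ * ‖v‖, ?_⟩
  rintro _ ⟨u, hu, rfl⟩
  have hu' : ‖u‖ ≤ c⁻¹ := by
    simpa only [one_div] using (le_div_iff₀' hc).mpr ((hcp u).trans hu)
  calc ⟪u, v⟫ ≤ ‖u‖ * ‖v‖ := real_inner_le_norm u v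
    _ ≤ c⁻¹ * ‖v‖ := by gcongr

theorem dualNorm_nonneg (hp : ∀ x, p x = 0 → x = 0) (v : E) : 0 ≤ p.dualNorm v :=
  le_csSup (bddAbove_inner_of_le_one hp v) ⟨0, by simp, by simp⟩

theorem inner_le_mul_dualNorm (hp : ∀ x, p x = 0 → x = 0) (u v : E) :
    ⟪u, v⟫ ≤ p u * p.dualNorm v := by
  rcases (apply_nonneg p u).eq_or_lt' with hu | hu
  · simp [hp u hu]
  have hmem : (p u)⁻¹ * ⟪u, v⟫ ∈ {y | ∃ w, p w ≤ 1 ∧ y = ⟪w, v⟫} :=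
    ⟨(p u)⁻¹ • u, by simp [map_smul_eq_mul, abs_of_pos hu, hu.ne'],
      by rw [real_inner_smul_left]⟩
  have := le_csSup (bddAbove_inner_of_le_one hp v) hmem
  rwa [inv_mul_le_iff₀ hu] at this

end Dual

section RegularizedMinimizer

variable {E : Type*} [NormedAddCommGroup E] [InnerProductSpace ℝ E]
  {L : E → ℝ} {R : Seminorm ℝ E} {g δs δhat : E} {r lam l : ℝ}

theorem neg_inner_sub_le_mul_add (hdual : ∀ u, ⟪u, g⟫ ≤ R u * r) (hr : 0 ≤ r) :
    -⟪g, δhat - δs⟫ ≤ r * (R δhat + R δs) :=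
  calc -⟪g, δhat - δs⟫ = ⟪δs - δhat, g⟫ := by rw [← inner_neg_right, neg_sub, real_inner_comm]
    _ ≤ R (δs - δhat) * r := hdual _
    _ ≤ r * (R δhat + R δs) := by
      rw [mul_comm, add_comm]; exact mul_le_mul_of_nonneg_left (map_sub_le_add R _ _) hr

theorem map_sub_le_four_mul_of_penalized_le (hgrad : ⟪g, δhat - δs⟫ ≤ L δhat - L δs)
    (hdual : ∀ u, ⟪u, g⟫ ≤ R u * r) (hr : 0 ≤ r) (hlam : 2 * r ≤ lam) (hlam_pos : 0 < lam)
    (hmin : L δhat + lam * R δhat ≤ L δs + lam * R δs) (hδs : R δs ≤ l) :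
    R (δhat - δs) ≤ 4 * l := by
  have hneg := neg_inner_sub_le_mul_add (δhat := δhat) (δs := δs) hdual hr
  have hcone : R δhat ≤ 3 * R δs := by
    have : lam * R δhat ≤ lam * (3 * R δs) := by
      nlinarith [apply_nonneg R δhat, apply_nonneg R δs]
    exact le_of_mul_le_mul_left this hlam_pos
  linarith [map_sub_le_add R δhat δs]

theorem sub_sub_inner_le_of_penalized_le (hdual : ∀ u, ⟪u, g⟫ ≤ R u * r) (hr : 0 ≤ r)
    (hlam : r ≤ lam) (hmin : L δhat + lam * R δhat ≤ L δs + lam * R δs) (hδs : R δs ≤ l) :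
    L δhat - L δs - ⟪g, δhat - δs⟫ ≤ r * l + lam * R δs := by
  have hneg := neg_inner_sub_le_mul_add (δhat := δhat) (δs := δs) hdual hr
  nlinarith [apply_nonneg R δhat]

end RegularizedMinimizer

end Seminorm

theorem stmt6_general {p : ℕ}
    (L : EuclideanSpace ℝ (Fin p) → ℝ)
    (hL_convex : ConvexOn ℝ Set.univ L)
    (hL_diff : Differentiable ℝ L)
    (R Rstar : EuclideanSpace ℝ (Fin p) → ℝ)
    (hR_add : ∀ x y, R (x + y) ≤ R x + R y)
    (hR_smul : ∀ (c : ℝ) (x : EuclideanSpace ℝ (Fin p)), R (c • x) = |c| * R x)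
    (hR_def : ∀ x, R x = 0 → x = 0)
    (hRstar : ∀ v, Rstar v = sSup {y | ∃ u, R u ≤ 1 ∧ y = ⟪u, v⟫})
    (δs : EuclideanSpace ℝ (Fin p)) (l : ℝ) (hδs : R δs ≤ l)
    (κ τ : ℝ)
    (hRSC : ∀ Δ : EuclideanSpace ℝ (Fin p), R Δ ≤ 4 * l →
      κ * ‖Δ‖ ^ 2 - τ ≤ L (δs + Δ) - L δs - ⟪gradient L δs, Δ⟫)
    (lam : ℝ) (hlam_pos : 0 < lam)
    (hlam : 2 * Rstar (gradient L δs) ≤ lam)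
    (δhat : EuclideanSpace ℝ (Fin p))
    (hmin : ∀ δ, L δhat + lam * R δhat ≤ L δ + lam * R δ) :
    κ * ‖δhat - δs‖ ^ 2 ≤ 2 * Rstar (gradient L δs) * l + lam * R δs + τ ∧
      2 * Rstar (gradient L δs) * l + lam * R δs + τ ≤ 3 * lam * l + τ := by
  let N : Seminorm ℝ (EuclideanSpace ℝ (Fin p)) := Seminorm.of R hR_add hR_smul
  set g := gradient L δs
  have hr : 0 ≤ Rstar g := (hRstar g).symm ▸ N.dualNorm_nonneg hR_def g
  have hdual : ∀ u, ⟪u, g⟫ ≤ N u * Rstar g :=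
    fun u => (hRstar g).symm ▸ N.inner_le_mul_dualNorm hR_def u g
  have hgrad := hL_convex.inner_gradient_le_sub (hL_diff δs) δhat
  have hl : 0 ≤ l := (apply_nonneg N δs).trans hδs
  have hcone := N.map_sub_le_four_mul_of_penalized_le hgrad hdual hr hlam hlam_pos (hmin δs) hδs
  have hRSC' := hRSC _ hcone
  rw [add_sub_cancel] at hRSC'
  have hbasic : L δhat - L δs - ⟪g, δhat - δs⟫ ≤ Rstar g * l + lam * R δs :=
    Seminorm.sub_sub_inner_le_of_penalized_le hdual hr (by linarith) (hmin δs) hδs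
  have hrl := mul_le_mul_of_nonneg_right hlam hl
  have hrl_nonneg := mul_nonneg hr hl
  constructor
  · linarith
  · linarith [mul_le_mul_of_nonneg_left hδs hlam_pos.le]

/-- Lagrangian fine-tuning error bound under restricted strong convexity. -/
theorem stmt6 {p : ℕ}
    (L : EuclideanSpace ℝ (Fin p) → ℝ)
    (hL_convex : ConvexOn ℝ Set.univ L)
    (hL_diff : Differentiable ℝ L)
    (R Rstar : EuclideanSpace ℝ (Fin p) → ℝ)
    (hR_nonneg : ∀ x, 0 ≤ R x)
    (hR_add : ∀ x y, R (x + y) ≤ R x + R y)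
    (hR_smul : ∀ (c : ℝ) (x : EuclideanSpace ℝ (Fin p)), R (c • x) = |c| * R x)
    (hR_def : ∀ x, R x = 0 → x = 0)
    (hRstar : ∀ v, Rstar v = sSup {y | ∃ u, R u ≤ 1 ∧ y = ⟪u, v⟫})
    (δs : EuclideanSpace ℝ (Fin p)) (l : ℝ) (hδs : R δs ≤ l)
    (κ τ : ℝ) (hκ : 0 < κ) (hτ : 0 ≤ τ)
    (hRSC : ∀ Δ : EuclideanSpace ℝ (Fin p), R Δ ≤ 4 * l →
      κ * ‖Δ‖ ^ 2 - τ ≤ L (δs + Δ) - L δs - ⟪gradient L δs, Δ⟫)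
    (lam : ℝ) (hlam_pos : 0 < lam)
    (hlam : 2 * Rstar (gradient L δs) ≤ lam)
    (δhat : EuclideanSpace ℝ (Fin p))
    (hmin : ∀ δ, L δhat + lam * R δhat ≤ L δ + lam * R δ) :
    κ * ‖δhat - δs‖ ^ 2 ≤ 2 * Rstar (gradient L δs) * l + lam * R δs + τ ∧
      2 * Rstar (gradient L δs) * l + lam * R δs + τ ≤ 3 * lam * l + τ :=
  stmt6_general L hL_convex hL_diff R Rstar hR_add hR_smul hR_def hRstar δs l hδs κ τ hRSC lam
    hlam_pos hlam δhat hmin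
end

section
/- Let L : R^p → R be convex and differentiable, R a norm with dual norm R*, λ_P > 0 and λ_Q ≥ λ_P + R*(∇L(θ'₀)) for a fixed θ'₀ ∈ R^p. Then for every δ ∈ R^p, L(θ'₀ − δ) + λ_P R(θ'₀ − δ) + λ_Q R(δ) ≥ L(θ'₀) + λ_P R(θ'₀); hence δ = 0 is a global minimizer of δ ↦ L(θ'₀ − δ) + λ_P R(θ'₀ − δ) + λ_Q R(δ). -/
/-!
Convexity gives `L (θ - δ) ≥ L θ - ⟪∇L θ, δ⟫`, and the dual-norm inequality bounds
`⟪∇L θ, δ⟫ ≤ R* (∇L θ) * R δ`; with the triangle inequality `R θ ≤ R (θ - δ) + R δ`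
both error terms are absorbed by `λ_Q R δ ≥ (λ_P + R* (∇L θ)) R δ`.
The dual norm is finite because, by compactness of the Euclidean unit sphere, a definite
seminorm in finite dimension dominates a multiple of the Euclidean norm.
-/

open scoped RealInnerProductSpace

open Set

theorem ConvexOn.add_fderiv_sub_le {E : Type*} [NormedAddCommGroup E] [NormedSpace ℝ E]
    {s : Set E} {f : E → ℝ} {f' : E →L[ℝ] ℝ} {x y : E}
    (hf : ConvexOn ℝ s f) (hx : x ∈ s) (hy : y ∈ s) (hf' : HasFDerivAt f f' x) :
    f x + f' (y - x) ≤ f y := by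
  have hderiv : HasDerivAt (f ∘ (AffineMap.lineMap x y : ℝ →ᵃ[ℝ] E)) (f' (y - x)) 0 := by
    have hline : HasDerivAt (AffineMap.lineMap x y : ℝ → E) (y - x) 0 :=
      AffineMap.hasDerivAt_lineMap
    exact hf'.comp_hasDerivAt_of_eq 0 hline (by simp)
  have := (hf.comp_affineMap (AffineMap.lineMap x y : ℝ →ᵃ[ℝ] E)).le_slope_of_hasDerivAt
    (by simpa using hx) (by simpa using hy) zero_lt_one hderiv
  simp only [slope_def_field, Function.comp_apply, AffineMap.lineMap_apply_zero,
    AffineMap.lineMap_apply_one, sub_zero, div_one] at this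
  linarith

theorem ConvexOn.add_inner_gradient_sub_le {E : Type*} [NormedAddCommGroup E]
    [InnerProductSpace ℝ E] [CompleteSpace E] {s : Set E} {f : E → ℝ} {x y : E}
    (hf : ConvexOn ℝ s f) (hx : x ∈ s) (hy : y ∈ s) (hd : DifferentiableAt ℝ f x) :
    f x + ⟪gradient f x, y - x⟫ ≤ f y := by
  rw [inner_gradient_left]
  exact hf.add_fderiv_sub_le hx hy hd.hasFDerivAt

theorem Seminorm.exists_pos_norm_le_mul {E : Type*} [NormedAddCommGroup E] [NormedSpace ℝ E]
    [FiniteDimensional ℝ E] (q : Seminorm ℝ E) (hq : ∀ x, q x = 0 → x = 0) :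
    ∃ C > 0, ∀ x, ‖x‖ ≤ C * q x := by
  have hpos : ∀ x, x ≠ 0 → 0 < q x := fun x hx =>
    (apply_nonneg q x).lt_of_ne fun h => hx (hq x h.symm)
  have hcont : ContinuousOn (fun x => (q x)⁻¹) (Metric.sphere (0 : E) 1) :=
    q.convexOn.locallyLipschitz.continuous.continuousOn.inv₀ fun x hx =>
      (hpos x (ne_zero_of_mem_unit_sphere ⟨x, hx⟩)).ne'
  obtain ⟨C, hC, hbound⟩ :=
    ((isCompact_sphere 0 1).image_of_continuousOn hcont).isBounded.exists_pos_norm_le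
  refine ⟨C, hC, fun x => ?_⟩
  rcases eq_or_ne x 0 with rfl | hx
  · simp
  have := hbound _ (mem_image_of_mem _ (x := ‖x‖⁻¹ • x) (by simp [norm_smul, hx]))
  simp only [map_smul_eq_mul, norm_mul, norm_inv, norm_norm,
    Real.norm_of_nonneg (apply_nonneg q x), mul_inv, inv_inv] at this
  rwa [← div_eq_mul_inv, div_le_iff₀ (hpos x hx)] at this

section DualNorm

variable {E : Type*} [NormedAddCommGroup E] [InnerProductSpace ℝ E]

/-- Junk value `0` when the set is unbounded above. -/
noncomputable def dualNorm (R : E → ℝ) (v : E) : ℝ :=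
  sSup {y | ∃ u, R u ≤ 1 ∧ y = ⟪u, v⟫}

theorem Seminorm.real_inner_le_dualNorm_mul [FiniteDimensional ℝ E] (q : Seminorm ℝ E)
    (hq : ∀ x, q x = 0 → x = 0) (u v : E) : ⟪u, v⟫ ≤ dualNorm q v * q u := by
  obtain ⟨C, hC, hnorm⟩ := q.exists_pos_norm_le_mul hq
  have hbdd : BddAbove {y | ∃ u, q u ≤ 1 ∧ y = ⟪u, v⟫} := by
    refine ⟨C * ‖v‖, ?_⟩
    rintro _ ⟨w, hw, rfl⟩
    calc ⟪w, v⟫ ≤ ‖w‖ * ‖v‖ := real_inner_le_norm w v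
      _ ≤ C * ‖v‖ := by
        gcongr
        calc ‖w‖ ≤ C * q w := hnorm w
          _ ≤ C := mul_le_of_le_one_right hC.le hw
  rcases eq_or_ne u 0 with rfl | hu
  · simp
  have hqu : 0 < q u := (apply_nonneg q u).lt_of_ne fun h => hu (hq u h.symm)
  have hmem : (q u)⁻¹ * ⟪u, v⟫ ∈ {y | ∃ u, q u ≤ 1 ∧ y = ⟪u, v⟫} :=
    ⟨(q u)⁻¹ • u, by rw [map_smul_eq_mul, norm_inv, Real.norm_of_nonneg hqu.le,
      inv_mul_cancel₀ hqu.ne'], (real_inner_smul_left _ _ _).symm⟩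
  rw [mul_comm, ← inv_mul_le_iff₀ hqu]
  exact le_csSup hbdd hmem

theorem ConvexOn.penalized_le_of_dualNorm_gradient_le [FiniteDimensional ℝ E] {L : E → ℝ}
    {θ : E} (hL : ConvexOn ℝ univ L) (hd : DifferentiableAt ℝ L θ) (q : Seminorm ℝ E)
    (hq : ∀ x, q x = 0 → x = 0) {lamP lamQ : ℝ} (hlamP : 0 ≤ lamP)
    (hlamQ : lamP + dualNorm q (gradient L θ) ≤ lamQ) (δ : E) :
    L θ + lamP * q θ ≤ L (θ - δ) + lamP * q (θ - δ) + lamQ * q δ := by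
  have hconvex : L θ - ⟪gradient L θ, δ⟫ ≤ L (θ - δ) := by
    simpa [← sub_eq_add_neg] using
      hL.add_inner_gradient_sub_le (mem_univ θ) (mem_univ (θ - δ)) hd
  have hdual : ⟪gradient L θ, δ⟫ ≤ dualNorm q (gradient L θ) * q δ := by
    rw [real_inner_comm]
    exact q.real_inner_le_dualNorm_mul hq δ _
  have htriangle : q θ ≤ q (θ - δ) + q δ := by
    simpa using map_add_le_add q (θ - δ) δ
  have hpenalty : (lamP + dualNorm q (gradient L θ)) * q δ ≤ lamQ * q δ :=
    mul_le_mul_of_nonneg_right hlamQ (apply_nonneg q δ)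
  linarith [mul_le_mul_of_nonneg_left htriangle hlamP]

end DualNorm

theorem stmt17_general {p : ℕ}
    (L : EuclideanSpace ℝ (Fin p) → ℝ)
    (hL_convex : ConvexOn ℝ Set.univ L)
    (hL_diff : Differentiable ℝ L)
    (R Rstar : EuclideanSpace ℝ (Fin p) → ℝ)
    (hR_add : ∀ x y, R (x + y) ≤ R x + R y)
    (hR_smul : ∀ (c : ℝ) (x : EuclideanSpace ℝ (Fin p)), R (c • x) = |c| * R x)
    (hR_def : ∀ x, R x = 0 → x = 0)
    (hRstar : ∀ v, Rstar v = sSup {y | ∃ u, R u ≤ 1 ∧ y = ⟪u, v⟫})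
    (θ0 : EuclideanSpace ℝ (Fin p))
    (lamP lamQ : ℝ) (hlamP : 0 < lamP)
    (hlamQ : lamP + Rstar (gradient L θ0) ≤ lamQ) :
    (∀ δ : EuclideanSpace ℝ (Fin p),
      L θ0 + lamP * R θ0 ≤ L (θ0 - δ) + lamP * R (θ0 - δ) + lamQ * R δ) ∧
    (∀ δ : EuclideanSpace ℝ (Fin p),
      L (θ0 - 0) + lamP * R (θ0 - 0) + lamQ * R 0 ≤
        L (θ0 - δ) + lamP * R (θ0 - δ) + lamQ * R δ) := by
  let q : Seminorm ℝ (EuclideanSpace ℝ (Fin p)) := Seminorm.of R hR_add hR_smul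
  have hRstar_eq : Rstar = dualNorm q := funext hRstar
  have key : ∀ δ, L θ0 + lamP * R θ0 ≤ L (θ0 - δ) + lamP * R (θ0 - δ) + lamQ * R δ :=
    hL_convex.penalized_le_of_dualNorm_gradient_le (hL_diff θ0) q hR_def hlamP.le
      (hRstar_eq ▸ hlamQ)
  refine ⟨key, fun δ => ?_⟩
  simpa [show R 0 = 0 from map_zero q] using key δ

/-- If `λ_Q ≥ λ_P + R*(∇L(θ'₀))`, then for every `δ`,
`L(θ'₀ − δ) + λ_P R(θ'₀ − δ) + λ_Q R(δ) ≥ L(θ'₀) + λ_P R(θ'₀)`; hence `δ = 0` is a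
global minimizer of `δ ↦ L(θ'₀ − δ) + λ_P R(θ'₀ − δ) + λ_Q R(δ)`. -/
theorem stmt17 {p : ℕ}
    (L : EuclideanSpace ℝ (Fin p) → ℝ)
    (hL_convex : ConvexOn ℝ Set.univ L)
    (hL_diff : Differentiable ℝ L)
    (R Rstar : EuclideanSpace ℝ (Fin p) → ℝ)
    (hR_nonneg : ∀ x, 0 ≤ R x)
    (hR_add : ∀ x y, R (x + y) ≤ R x + R y)
    (hR_smul : ∀ (c : ℝ) (x : EuclideanSpace ℝ (Fin p)), R (c • x) = |c| * R x)
    (hR_def : ∀ x, R x = 0 → x = 0)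
    (hRstar : ∀ v, Rstar v = sSup {y | ∃ u, R u ≤ 1 ∧ y = ⟪u, v⟫})
    (θ0 : EuclideanSpace ℝ (Fin p))
    (lamP lamQ : ℝ) (hlamP : 0 < lamP)
    (hlamQ : lamP + Rstar (gradient L θ0) ≤ lamQ) :
    (∀ δ : EuclideanSpace ℝ (Fin p),
      L θ0 + lamP * R θ0 ≤ L (θ0 - δ) + lamP * R (θ0 - δ) + lamQ * R δ) ∧
    (∀ δ : EuclideanSpace ℝ (Fin p),
      L (θ0 - 0) + lamP * R (θ0 - 0) + lamQ * R 0 ≤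
        L (θ0 - δ) + lamP * R (θ0 - δ) + lamQ * R δ) :=
  stmt17_general L hL_convex hL_diff R Rstar hR_add hR_smul hR_def hRstar θ0 lamP lamQ hlamP hlamQ
end
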